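/- Let G be a finite simple graph whose vertex set is partitioned into three sets A1, A2, A3, each of which is a clique of G (that is, G is the complement of a 3-partite graph). If G has a triangle partition, then G has a triangle partition P such that for each i ∈ {1, 2, 3}, at most 14 vertices of Ai belong to triangles of P that are not entirely contained in a single one of the classes A1, A2, A3. -/

import Mathlib

/-!
Colour each vertex by its class and call the multiset of colours of a triangle its profile.
Take a triangle partition with as few non-monochromatic triangles as possible. If three of its
triangles had the same non-constant profile, their nine vertices would meet every class in a
multiple of three vertices; since each class is a clique, they could be regrouped into three
monochromatic triangles, contradicting minimality. So each of the seven non-constant profiles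
occurs at most twice, and as class `i` occurs seven times in total among these profiles, at most
`2 * 7 = 14` vertices of class `i` lie in non-monochromatic triangles.
-/

/-- A triangle in a simple graph: a set of three pairwise adjacent vertices. -/
def IsTriangle {V : Type*} (G : SimpleGraph V) (T : Finset V) : Prop :=
  T.card = 3 ∧ (T : Set V).Pairwise G.Adj

/-- A triangle packing: a collection of pairwise vertex-disjoint triangles. -/
def IsTrianglePacking {V : Type*} (G : SimpleGraph V) (P : Finset (Finset V)) : Prop :=
  (∀ T ∈ P, IsTriangle G T) ∧
    (P : Set (Finset V)).Pairwise fun S T => Disjoint S T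

/-- A triangle partition: a triangle packing covering every vertex. -/
def IsTrianglePartition {V : Type*} (G : SimpleGraph V) (P : Finset (Finset V)) : Prop :=
  IsTrianglePacking G P ∧ ∀ v : V, ∃ T ∈ P, v ∈ T

open Finset

theorem Finset.exists_finpartition_card_eq {α : Type*} [DecidableEq α] {s : Finset α} {m : ℕ}
    (hdvd : m ∣ #s) : ∃ P : Finpartition s, ∀ t ∈ P.parts, #t = m := by
  have h : #s / m * m + 0 * (m + 1) = #s := by rw [zero_mul, add_zero, Nat.div_mul_cancel hdvd]
  refine ⟨(⊥ : Finpartition s).equitabilise h, fun t ht => ?_⟩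
  refine (Finpartition.card_eq_of_mem_parts_equitabilise ht).resolve_right fun hbig => ?_
  have := (⊥ : Finpartition s).card_filter_equitabilise_big h
  rw [card_eq_zero, filter_eq_empty_iff] at this
  exact this ht hbig

theorem Finset.sum_comp_le_mul_sum {ι κ : Type*} [DecidableEq κ] {s : Finset ι} {t : Finset κ}
    {g : ι → κ} (f : κ → ℕ) {n : ℕ} (hg : ∀ i ∈ s, g i ∈ t)
    (hfib : ∀ k, #{i ∈ s | g i = k} ≤ n) : ∑ i ∈ s, f (g i) ≤ n * ∑ k ∈ t, f k := by
  rw [sum_comp, mul_sum]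
  calc ∑ k ∈ s.image g, #{i ∈ s | g i = k} • f k
      ≤ ∑ k ∈ s.image g, n * f k := sum_le_sum fun k _ => Nat.mul_le_mul_right _ (hfib k)
    _ ≤ ∑ k ∈ t, n * f k := sum_le_sum_of_subset (image_subset_iff.2 hg)

section Profiles

variable {V W : Type*} {G : SimpleGraph V}

def profile (c : V → W) (T : Finset V) : Multiset W := T.val.map c

def IsMonochromatic (c : V → W) (T : Finset V) : Prop := ∃ w, ∀ v ∈ T, c v = w

theorem card_filter_eq_count_profile [DecidableEq W] (c : V → W) (T : Finset V) (w : W) :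
    #{v ∈ T | c v = w} = (profile c T).count w := by
  rw [profile, Multiset.count_map, card, filter_val]
  simp only [eq_comm]

theorem card_filter_biUnion_eq_sum_count [DecidableEq V] [DecidableEq W] (c : V → W)
    {R : Finset (Finset V)} (hR : (R : Set (Finset V)).PairwiseDisjoint id) (w : W) :
    #{v ∈ R.biUnion id | c v = w} = ∑ T ∈ R, (profile c T).count w := by
  rw [filter_biUnion, card_biUnion fun S hS T hT hST => disjoint_filter_filter (hR hS hT hST)]
  exact sum_congr rfl fun T _ => card_filter_eq_count_profile c T w

theorem IsTrianglePartition.sdiff_union [DecidableEq V] {P R N : Finset (Finset V)}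
    (hP : IsTrianglePartition G P) (hRP : R ⊆ P) (hN : IsTrianglePacking G N)
    (hNR : N.biUnion id = R.biUnion id) : IsTrianglePartition G (P \ R ∪ N) := by
  obtain ⟨⟨hPtri, hPdisj⟩, hPcov⟩ := hP
  have hdisj_new : ∀ S ∈ P \ R, ∀ T ∈ N, Disjoint S T := by
    intro S hS T hT
    rw [mem_sdiff] at hS
    refine disjoint_left.2 fun v hvS hvT => ?_
    have hv : v ∈ R.biUnion id := hNR ▸ mem_biUnion.2 ⟨T, hT, hvT⟩
    obtain ⟨T', hT'R, hvT'⟩ := mem_biUnion.1 hv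
    have hST' : S ≠ T' := fun h => hS.2 (h ▸ hT'R)
    exact disjoint_left.1 (hPdisj hS.1 (hRP hT'R) hST') hvS hvT'
  refine ⟨⟨fun T hT => ?_, fun S hS T hT hST => ?_⟩, fun v => ?_⟩
  · rcases mem_union.1 hT with hT | hT
    exacts [hPtri T (mem_sdiff.1 hT).1, hN.1 T hT]
  · rcases mem_union.1 hS with hS | hS <;> rcases mem_union.1 hT with hT | hT
    · exact hPdisj (mem_sdiff.1 hS).1 (mem_sdiff.1 hT).1 hST
    · exact hdisj_new S hS T hT
    · exact (hdisj_new T hT S hS).symm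
    · exact hN.2 hS hT hST
  · obtain ⟨T, hTP, hvT⟩ := hPcov v
    by_cases hTR : T ∈ R
    · obtain ⟨T', hT'N, hvT'⟩ := mem_biUnion.1 (hNR ▸ mem_biUnion.2 ⟨T, hTR, hvT⟩ :
        v ∈ N.biUnion id)
      exact ⟨T', mem_union_right _ hT'N, hvT'⟩
    · exact ⟨T, mem_union_left _ (mem_sdiff.2 ⟨hTP, hTR⟩), hvT⟩

theorem exists_monochromatic_trianglePacking [DecidableEq V] [DecidableEq W] {c : V → W}
    (hc : ∀ w, G.IsClique {v | c v = w}) (U : Finset V) (hU : ∀ w, 3 ∣ #{v ∈ U | c v = w}) :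
    ∃ N, IsTrianglePacking G N ∧ N.biUnion id = U ∧ ∀ T ∈ N, IsMonochromatic c T := by
  choose Q hQ using fun w => exists_finpartition_card_eq (hU w)
  have hsub : ∀ w, ∀ t ∈ (Q w).parts, ∀ v ∈ t, v ∈ U ∧ c v = w := fun w t ht v hv =>
    mem_filter.1 ((Q w).le ht hv)
  refine ⟨(U.image c).biUnion fun w => (Q w).parts, ⟨fun T hT => ?_, fun S hS T hT hST => ?_⟩,
    ?_, fun T hT => ?_⟩
  · obtain ⟨w, -, hT⟩ := mem_biUnion.1 hT
    exact ⟨hQ w T hT, (hc w).subset fun v hv => (hsub w T hT v hv).2⟩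
  · obtain ⟨w, -, hS⟩ := mem_biUnion.1 hS
    obtain ⟨w', -, hT⟩ := mem_biUnion.1 hT
    refine disjoint_left.2 fun v hvS hvT => ?_
    have hww' : w = w' := (hsub w S hS v hvS).2.symm.trans (hsub w' T hT v hvT).2
    subst hww'
    exact disjoint_left.1 ((Q w).disjoint hS hT hST) hvS hvT
  · ext v
    simp only [mem_biUnion, id]
    refine ⟨fun ⟨t, ⟨w, _, ht⟩, hvt⟩ => (hsub w t ht v hvt).1, fun hv => ?_⟩
    obtain ⟨t, ht, hvt⟩ := (Q (c v)).exists_mem (mem_filter.2 ⟨hv, rfl⟩)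
    exact ⟨t, ⟨c v, mem_image_of_mem c hv, ht⟩, hvt⟩
  · obtain ⟨w, -, hT⟩ := mem_biUnion.1 hT
    exact ⟨w, fun v hv => (hsub w T hT v hv).2⟩

theorem exists_trianglePartition_card_profile_le_two [DecidableEq V] [DecidableEq W] {c : V → W}
    [DecidablePred (IsMonochromatic c)]
    (hc : ∀ w, G.IsClique {v | c v = w}) (hpart : ∃ P, IsTrianglePartition G P) :
    ∃ P, IsTrianglePartition G P ∧
      ∀ p, #{T ∈ {T ∈ P | ¬IsMonochromatic c T} | profile c T = p} ≤ 2 := by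
  obtain ⟨P, hP, hmin⟩ := (measure fun P : Finset (Finset V) =>
    #{T ∈ P | ¬IsMonochromatic c T}).wf.has_min {P | IsTrianglePartition G P} hpart
  refine ⟨P, hP, fun p => not_lt.1 fun hp => ?_⟩
  obtain ⟨R, hRsub, hR3⟩ := exists_subset_card_eq (Nat.succ_le_of_lt hp)
  have hRP : R ⊆ P := fun T hT => (mem_filter.1 (mem_filter.1 (hRsub hT)).1).1
  have hRmono : ∀ T ∈ R, ¬IsMonochromatic c T := fun T hT =>
    (mem_filter.1 (mem_filter.1 (hRsub hT)).1).2
  have hRprofile : ∀ T ∈ R, profile c T = p := fun T hT => (mem_filter.1 (hRsub hT)).2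
  have hdvd : ∀ w, 3 ∣ #{v ∈ R.biUnion id | c v = w} := fun w => by
    rw [card_filter_biUnion_eq_sum_count c (hP.1.2.mono (coe_subset.2 hRP)),
      sum_congr rfl fun T hT => by rw [hRprofile T hT], sum_const, hR3, smul_eq_mul]
    exact dvd_mul_right 3 _
  obtain ⟨N, hN, hNR, hNmono⟩ := exists_monochromatic_trianglePacking hc _ hdvd
  refine hmin _ (hP.sdiff_union hRP hN hNR) (card_lt_card ?_)
  have hsub : {T ∈ P \ R ∪ N | ¬IsMonochromatic c T} ⊆ {T ∈ P | ¬IsMonochromatic c T} := by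
    intro T hT
    obtain ⟨hT, hTmono⟩ := mem_filter.1 hT
    rcases mem_union.1 hT with hT | hT
    · exact mem_filter.2 ⟨(mem_sdiff.1 hT).1, hTmono⟩
    · exact absurd (hNmono T hT) hTmono
  obtain ⟨T, hT⟩ : R.Nonempty := card_pos.1 (hR3 ▸ three_pos)
  refine (ssubset_iff_of_subset hsub).2 ⟨T, mem_filter.2 ⟨hRP hT, hRmono T hT⟩, fun hTQ => ?_⟩
  rcases mem_union.1 (mem_filter.1 hTQ).1 with hT' | hT'
  · exact (mem_sdiff.1 hT').2 hT
  · exact hRmono T hT (hNmono T hT')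

theorem sum_count_profile_le_fourteen {c : V → Fin 3} {S : Finset (Finset V)}
    (hS : ∀ T ∈ S, #T = 3 ∧ ¬IsMonochromatic c T)
    (hfib : ∀ p, #{T ∈ S | profile c T = p} ≤ 2) (i : Fin 3) :
    ∑ T ∈ S, (profile c T).count i ≤ 14 := by
  let nonconstant : Finset (Multiset (Fin 3)) :=
    {{0, 0, 1}, {0, 0, 2}, {0, 1, 1}, {0, 2, 2}, {1, 1, 2}, {1, 2, 2}, {0, 1, 2}}
  have hnonconstant : ∀ x y z : Fin 3, (¬∃ j, {x, y, z} = Multiset.replicate 3 j) →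
      ({x, y, z} : Multiset (Fin 3)) ∈ nonconstant := by decide
  have hprofile : ∀ T ∈ S, profile c T ∈ nonconstant := by
    intro T hT
    obtain ⟨x, y, z, hxyz⟩ := Multiset.card_eq_three.1
      (show Multiset.card (profile c T) = 3 by simp [profile, (hS T hT).1])
    rw [hxyz]
    refine hnonconstant x y z fun ⟨j, hj⟩ => (hS T hT).2 ⟨j, fun v hv => ?_⟩
    have hcv : c v ∈ profile c T := Multiset.mem_map_of_mem c hv
    rw [hxyz, hj] at hcv
    exact Multiset.eq_of_mem_replicate hcv
  calc ∑ T ∈ S, (profile c T).count i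
      ≤ 2 * ∑ p ∈ nonconstant, p.count i := sum_comp_le_mul_sum (·.count i) hprofile hfib
    _ = 14 := by revert i; decide

end Profiles

theorem stmt13_general {V : Type*} (G : SimpleGraph V) (A : Fin 3 → Set V)
    (hdisj : ∀ i j, i ≠ j → Disjoint (A i) (A j))
    (hunion : A 0 ∪ A 1 ∪ A 2 = Set.univ)
    (hclique : ∀ i, G.IsClique (A i))
    (hpart : ∃ P : Finset (Finset V), IsTrianglePartition G P) :
    ∃ P : Finset (Finset V), IsTrianglePartition G P ∧
      ∀ i : Fin 3,
        {v | v ∈ A i ∧ ∃ T ∈ P, v ∈ T ∧ ¬∃ j : Fin 3, (T : Set V) ⊆ A j}.ncard ≤ 14 := by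
  classical
  have hcover : ∀ v, ∃ i, v ∈ A i := fun v => by
    have hv : v ∈ A 0 ∪ A 1 ∪ A 2 := hunion ▸ Set.mem_univ v
    rcases hv with (hv | hv) | hv
    exacts [⟨0, hv⟩, ⟨1, hv⟩, ⟨2, hv⟩]
  choose c hc using hcover
  obtain rfl : A = fun i => {v | c v = i} := funext fun i => Set.ext fun v =>
    ⟨fun hv => by_contra fun hne => Set.disjoint_left.1 (hdisj _ _ hne) (hc v) hv,
      fun hv => hv ▸ hc v⟩
  obtain ⟨P, hP, hfib⟩ := exists_trianglePartition_card_profile_le_two hclique hpart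
  refine ⟨P, hP, fun i => ?_⟩
  set S := {T ∈ P | ¬IsMonochromatic c T}
  have hsub : {v | c v = i ∧ ∃ T ∈ P, v ∈ T ∧ ¬IsMonochromatic c T} ⊆
      ↑({v ∈ S.biUnion id | c v = i}) := fun v ⟨hvi, T, hTP, hvT, hT⟩ =>
    mem_filter.2 ⟨mem_biUnion.2 ⟨T, mem_filter.2 ⟨hTP, hT⟩, hvT⟩, hvi⟩
  calc _ ≤ #{v ∈ S.biUnion id | c v = i} :=
        (Set.ncard_le_ncard hsub).trans_eq (Set.ncard_coe_finset _)
    _ = ∑ T ∈ S, (profile c T).count i :=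
      card_filter_biUnion_eq_sum_count c (hP.1.2.mono (coe_subset.2 (filter_subset _ _))) i
    _ ≤ 14 := sum_count_profile_le_fourteen
        (fun T hT => ⟨(hP.1.1 T (mem_filter.1 hT).1).1, (mem_filter.1 hT).2⟩) hfib i

/-- Let `G` be the complement of a 3-partite graph: its vertex set is
partitioned into three cliques `A 0, A 1, A 2`. If `G` has a triangle partition, then it
has a triangle partition `P` such that for each `i`, at most 14 vertices of `A i` belong
to triangles of `P` that are not entirely contained in a single class. -/
theorem stmt13 {V : Type*} [Fintype V] (G : SimpleGraph V) (A : Fin 3 → Set V)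
    (hdisj : ∀ i j, i ≠ j → Disjoint (A i) (A j))
    (hunion : A 0 ∪ A 1 ∪ A 2 = Set.univ)
    (hclique : ∀ i, G.IsClique (A i))
    (hpart : ∃ P : Finset (Finset V), IsTrianglePartition G P) :
    ∃ P : Finset (Finset V), IsTrianglePartition G P ∧
      ∀ i : Fin 3,
        {v | v ∈ A i ∧ ∃ T ∈ P, v ∈ T ∧ ¬∃ j : Fin 3, (T : Set V) ⊆ A j}.ncard ≤ 14 :=
  stmt13_general G A hdisj hunion hclique hpart
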